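/- arXiv:1506.02823 — 2 statements merged into one kernel-verified Lean document; each statement's English description precedes it below -/
import Mathlib

section
/- If each f_i is convex and continuously differentiable, then a point u is Pareto critical (0 ∈ co{∇f_i(u)}) if and only if u is a weak Pareto point (there is no v with f_i(v) < f_i(u) for all i). -/
open scoped RealInnerProductSpace

/-!
Both sides say that there is no common descent direction at `u`, i.e. no `d` with
`⟪∇f_i(u), d⟫ < 0` for all `i`. By Gordan's alternative such a `d` exists iff `0` is not in the
convex hull of the gradients: otherwise minus the minimal-norm point of the (compact) hull is one.
A common descent direction lowers every `f_i` along a short step; conversely, by the gradient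
inequality `⟪∇f_i(u), v - u⟫ ≤ f_i(v) - f_i(u)` of convex functions, a point `v` improving every
`f_i` yields the descent direction `v - u`.
-/

open Filter Topology

section FirstOrder

variable {E : Type*} [NormedAddCommGroup E] [NormedSpace ℝ E] {f : E → ℝ} {f' : E →L[ℝ] ℝ} {u : E}

theorem ConvexOn.apply_sub_le_of_hasFDerivAt {s : Set E} {v : E} (hf : ConvexOn ℝ s f)
    (hu : u ∈ s) (hv : v ∈ s) (hd : HasFDerivAt f f' u) : f' (v - u) ≤ f v - f u := by
  have hline : HasDerivAt (f ∘ AffineMap.lineMap (k := ℝ) u v) (f' (v - u)) 0 := by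
    refine HasFDerivAt.comp_hasDerivAt (0 : ℝ) ?_ AffineMap.hasDerivAt_lineMap
    simpa using hd
  simpa [slope_def_field] using
    (hf.comp_affineMap (AffineMap.lineMap (k := ℝ) u v)).le_slope_of_hasDerivAt
      (by simpa using hu) (by simpa using hv) one_pos hline

theorem HasFDerivAt.eventually_lt_of_apply_neg {d : E} (hd : HasFDerivAt f f' u)
    (hneg : f' d < 0) : ∀ᶠ t in 𝓝[>] (0 : ℝ), f (u + t • d) < f u := by
  have hline : HasDerivAt (fun t : ℝ => f (u + t • d)) (f' d) 0 := by
    have hdir : HasDerivAt (fun t : ℝ => u + t • d) d 0 := by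
      simpa using ((hasDerivAt_id (0 : ℝ)).smul_const d).const_add u
    exact HasFDerivAt.comp_hasDerivAt (0 : ℝ) (by simpa using hd) hdir
  have hslope := (hasDerivAt_iff_tendsto_slope_zero.mp hline).mono_left
    (nhdsWithin_mono _ fun t (ht : 0 < t) => ht.ne')
  filter_upwards [hslope.eventually_lt_const hneg, self_mem_nhdsWithin] with t hlt (ht : 0 < t)
  simpa [smul_eq_mul, inv_mul_lt_iff₀ ht] using hlt

end FirstOrder

theorem Set.Finite.zero_mem_convexHull_iff_not_exists_inner_neg {F : Type*}
    [NormedAddCommGroup F] [InnerProductSpace ℝ F] {s : Set F} (hs : s.Finite) :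
    (0 : F) ∈ convexHull ℝ s ↔ ¬ ∃ d, ∀ g ∈ s, ⟪g, d⟫ < 0 := by
  constructor
  · rintro h0 ⟨d, hd⟩
    have hconv : Convex ℝ {g : F | ⟪g, d⟫ < 0} :=
      convex_halfSpace_lt ((innerₛₗ ℝ).flip d).isLinear 0
    simpa using convexHull_min (t := {g | ⟪g, d⟫ < 0}) hd hconv h0
  · intro hnd
    by_contra h0
    have hne : (convexHull ℝ s).Nonempty := by
      rw [convexHull_nonempty_iff, Set.nonempty_iff_ne_empty]
      rintro rfl
      exact hnd ⟨0, by simp⟩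
    obtain ⟨p, hpK, hpmin⟩ := exists_norm_eq_iInf_of_complete_convex hne
      (hs.isCompact_convexHull ℝ).isComplete (convex_convexHull ℝ s) 0
    have hp : 0 < ⟪p, p⟫ := real_inner_self_pos.mpr fun hp0 => h0 (hp0 ▸ hpK)
    refine hnd ⟨-p, fun g hg => ?_⟩
    have hobtuse := (norm_eq_iInf_iff_real_inner_le_zero (convex_convexHull ℝ s) hpK).mp hpmin g
      (subset_convexHull ℝ s hg)
    rw [zero_sub, inner_neg_left, inner_sub_right] at hobtuse
    rw [inner_neg_right, real_inner_comm]
    linarith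

/-- In the convex case, Pareto critical points coincide with weak Pareto points. -/
theorem pareto_critical_iff_weak_pareto_of_convex
    {H : Type*} [NormedAddCommGroup H] [InnerProductSpace ℝ H] [CompleteSpace H]
    {q : ℕ} (f : Fin q → H → ℝ) (hf : ∀ i, ContDiff ℝ 1 (f i))
    (hconv : ∀ i, ConvexOn ℝ Set.univ (f i)) (u : H) :
    (0 : H) ∈ convexHull ℝ (Set.range fun i => gradient (f i) u) ↔
      ¬ ∃ v : H, ∀ i, f i v < f i u := by
  have hderiv i : HasFDerivAt (f i) (fderiv ℝ (f i) u) u :=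
    ((hf i).differentiable one_ne_zero u).hasFDerivAt
  rw [(Set.finite_range _).zero_mem_convexHull_iff_not_exists_inner_neg, not_iff_not]
  simp only [Set.forall_mem_range, inner_gradient_left]
  constructor
  · rintro ⟨d, hd⟩
    have hdescent : ∀ᶠ t in 𝓝[>] (0 : ℝ), ∀ i, f i (u + t • d) < f i u :=
      eventually_all.mpr fun i => (hderiv i).eventually_lt_of_apply_neg (hd i)
    obtain ⟨t, ht⟩ := hdescent.exists
    exact ⟨u + t • d, ht⟩
  · rintro ⟨v, hv⟩
    refine ⟨v - u, fun i => ?_⟩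
    linarith [(hconv i).apply_sub_le_of_hasFDerivAt (Set.mem_univ u) (Set.mem_univ v) (hderiv i),
      hv i]
end

section
/- Improvement over the initial point: under the hypotheses of the dissipative property for index i (γ² > m·L_i), if the initial velocity satisfies ⟨∇f_i(u₀), u̇₀⟩ ≤ -γ‖u̇₀‖², then the trajectory of (IMOG) starting at (u₀, u̇₀) satisfies f_i(u(t)) ≤ f_i(u₀) for all t ≥ t₀. -/
/-!
Along the trajectory, `-(m ü + γ u̇)` is the minimal-norm element of the convex hull of the
gradients, so `⟪∇f_i(u), m ü + γ u̇⟫ ≤ -‖m ü + γ u̇‖²`. Combined with the Lipschitz bound on `∇f_i`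
along `u`, this makes `γ` times the upper right Dini derivative of the energy
`E = f_i(u) + (m/γ) ⟪∇f_i(u), u̇⟫ + m ‖u̇‖²` at most `-‖m ü‖² - (γ² - m L_i) ‖u̇‖² ≤ 0`
(Dini derivatives are needed because `∇f_i ∘ u` need not be differentiable). Hence `E` is
nonincreasing, `g = f_i ∘ u` satisfies `g + (m/γ) g' ≤ E(t₀)`, and Grönwall's inequality gives
`g(t) ≤ E(t₀) + (g(t₀) - E(t₀)) e^{-(γ/m)(t - t₀)}`. The condition on `u̇₀` says exactly that
`E(t₀) ≤ g(t₀)`, so the right-hand side is at most `g(t₀)`.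
-/

open scoped RealInnerProductSpace Topology
open Set Filter

/-- `limsup_{z → x⁺} slope f x z ≤ c`, phrased without `limsup` to avoid its boundedness side
conditions. -/
def RightDiniUpperLE (f : ℝ → ℝ) (c x : ℝ) : Prop :=
  ∀ r, c < r → ∀ᶠ z in 𝓝[>] x, slope f x z < r

theorem HasDerivAt.rightDiniUpperLE {f : ℝ → ℝ} {f' x : ℝ} (hf : HasDerivAt f f' x) :
    RightDiniUpperLE f f' x :=
  fun _ hr => hf.hasDerivWithinAt.limsup_slope_le' (lt_irrefl x) hr

namespace RightDiniUpperLE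

variable {f g h : ℝ → ℝ} {c d x : ℝ}

theorem mono (hf : RightDiniUpperLE f c x) (hcd : c ≤ d) : RightDiniUpperLE f d x :=
  fun r hr => hf r (hcd.trans_lt hr)

theorem add (hf : RightDiniUpperLE f c x) (hg : RightDiniUpperLE g d x) :
    RightDiniUpperLE (fun z => f z + g z) (c + d) x := by
  intro r hr
  filter_upwards [hf ((c - d + r) / 2) (by linarith), hg ((d - c + r) / 2) (by linarith)]
    with z hfz hgz
  have : slope (fun z => f z + g z) x z = slope f x z + slope g x z := by
    simp only [slope_def_field]; ring
  linarith

theorem const_mul (hf : RightDiniUpperLE f c x) {k : ℝ} (hk : 0 < k) :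
    RightDiniUpperLE (fun z => k * f z) (k * c) x := by
  intro r hr
  filter_upwards [hf (r / k) (by rwa [lt_div_iff₀' hk])] with z hz
  have : slope (fun z => k * f z) x z = k * slope f x z := by
    simp only [slope_def_field]; ring
  rw [this]
  exact (lt_div_iff₀' hk).mp hz

theorem of_eventually_le_of_tendsto (hle : ∀ᶠ z in 𝓝[>] x, slope f x z ≤ h z)
    (hh : Tendsto h (𝓝[>] x) (𝓝 c)) : RightDiniUpperLE f c x := fun _ hr => by
  filter_upwards [hle, hh (Iio_mem_nhds hr)] with z hfz hhz using hfz.trans_lt hhz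

end RightDiniUpperLE

theorem image_le_of_rightDiniUpperLE_zero {f : ℝ → ℝ} {a b : ℝ} (hf : ContinuousOn f (Ico a b))
    (hf' : ∀ x ∈ Ico a b, RightDiniUpperLE f 0 x) : ∀ t ∈ Ico a b, f t ≤ f a := fun _ ht =>
  image_le_of_liminf_slope_right_le_deriv_boundary (B := fun _ => f a) (B' := fun _ => 0)
    (hf.mono (Icc_subset_Ico_right ht.2)) le_rfl continuousOn_const
    (fun x _ => hasDerivWithinAt_const x _ (f a))
    (fun x hx r hr => (hf' x ⟨hx.1, hx.2.trans ht.2⟩ r hr).frequently) ⟨ht.1, le_rfl⟩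

theorem le_add_mul_exp_of_add_mul_deriv_le {g g' : ℝ → ℝ} {a b c B : ℝ} (hc : 0 < c)
    (hg : ∀ x ∈ Ico a b, HasDerivAt g (g' x) x) (hbound : ∀ x ∈ Ico a b, g x + c * g' x ≤ B) :
    ∀ t ∈ Ico a b, g t ≤ B + (g a - B) * Real.exp (-(t - a) / c) := by
  intro t ht
  have hsub : Ico a t ⊆ Ico a b := Ico_subset_Ico_right ht.2.le
  have hderiv_le : ∀ x ∈ Ico a t, g' x ≤ -c⁻¹ * g x + c⁻¹ * B := fun x hx => by
    have := hbound x (hsub hx)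
    field_simp
    linarith
  have := le_gronwallBound_of_liminf_deriv_right_le
    (fun x hx => (hg x (Icc_subset_Ico_right ht.2 hx)).continuousAt.continuousWithinAt)
    (fun x hx _ hr => (hg x (hsub hx)).hasDerivWithinAt.liminf_right_slope_le hr)
    le_rfl hderiv_le t ⟨ht.1, le_rfl⟩
  rw [gronwallBound_of_K_ne_0 (neg_ne_zero.2 (inv_ne_zero hc.ne'))] at this
  convert this using 1
  field_simp
  ring

section InnerProductSpace

variable {H : Type*} [NormedAddCommGroup H] [InnerProductSpace ℝ H]

theorem rightDiniUpperLE_inner {u v w : ℝ → H} {u' w' : H} {K x : ℝ}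
    (hv : ∀ᶠ z in 𝓝[>] x, ‖v z - v x‖ ≤ K * ‖u z - u x‖)
    (hu : HasDerivAt u u' x) (hw : HasDerivAt w w' x) :
    RightDiniUpperLE (fun s => ⟪v s, w s⟫) (K * ‖u'‖ * ‖w x‖ + ⟪v x, w'⟫) x := by
  refine .of_eventually_le_of_tendsto
    (h := fun z => K * ‖slope u x z‖ * ‖w z‖ + ⟪v x, slope w x z⟫) ?_ ?_
  · filter_upwards [hv, self_mem_nhdsWithin] with z hvz (hxz : x < z)
    have hinv : 0 ≤ (z - x)⁻¹ := inv_nonneg.2 (sub_pos.2 hxz).le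
    have hsplit : slope (fun s => ⟪v s, w s⟫) x z
        = (z - x)⁻¹ * ⟪v z - v x, w z⟫ + ⟪v x, slope w x z⟫ := by
      simp only [slope_def_module, smul_eq_mul, real_inner_smul_right, inner_sub_left,
        inner_sub_right]
      ring
    have hlip : ⟪v z - v x, w z⟫ ≤ K * ‖u z - u x‖ * ‖w z‖ :=
      (real_inner_le_norm _ _).trans (mul_le_mul_of_nonneg_right hvz (norm_nonneg _))
    rw [hsplit, slope_def_module u, norm_smul, Real.norm_of_nonneg hinv]
    nlinarith [mul_le_mul_of_nonneg_left hlip hinv]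
  · exact ((tendsto_const_nhds.mul (hasDerivAt_iff_tendsto_slope_left_right.1 hu).2.norm).mul
      (hw.continuousAt.tendsto.mono_left nhdsWithin_le_nhds).norm).add
      (tendsto_const_nhds.inner (hasDerivAt_iff_tendsto_slope_left_right.1 hw).2)

theorem norm_sq_le_inner_of_forall_norm_le {K : Set H} (hK : Convex ℝ K) {p : H} (hp : p ∈ K)
    (hmin : ∀ y ∈ K, ‖p‖ ≤ ‖y‖) {y : H} (hy : y ∈ K) : ‖p‖ ^ 2 ≤ ⟪y, p⟫ := by
  have : Nonempty K := ⟨⟨p, hp⟩⟩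
  have hinf : ‖(0 : H) - p‖ = ⨅ w : K, ‖(0 : H) - w‖ := by
    simp only [zero_sub, norm_neg]
    exact le_antisymm (le_ciInf fun w => hmin w w.2)
      (ciInf_le ⟨0, fun _ ⟨_, h⟩ => h ▸ norm_nonneg _⟩ (⟨p, hp⟩ : K))
  have := (norm_eq_iInf_iff_real_inner_le_zero hK hp).1 hinf y hy
  rw [zero_sub, inner_neg_left, inner_sub_right, real_inner_self_eq_norm_sq,
    real_inner_comm] at this
  linarith

theorem inner_dissipation_nonpos {G a b : H} {m γ L : ℝ} (hmL : m * L ≤ γ ^ 2)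
    (hG : ⟪G, m • b + γ • a⟫ ≤ -‖m • b + γ • a‖ ^ 2) :
    γ * ⟪G, a⟫ + m * L * ‖a‖ ^ 2 + m * ⟪G, b⟫ + 2 * m * γ * ⟪a, b⟫ ≤ 0 := by
  rw [inner_add_right, real_inner_smul_right, real_inner_smul_right, norm_add_sq_real,
    norm_smul, norm_smul, real_inner_smul_left, real_inner_smul_right, real_inner_comm a b,
    mul_pow, mul_pow, Real.norm_eq_abs, Real.norm_eq_abs, sq_abs, sq_abs] at hG
  -- with `p = m • b + γ • a`, the left side is at most `-‖m • b‖² - (γ² - m L) ‖a‖²`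
  nlinarith [mul_nonneg (sub_nonneg.2 hmL) (sq_nonneg ‖a‖), sq_nonneg (m * ‖b‖)]

variable [CompleteSpace H]

noncomputable def imogEnergy (F : H → ℝ) (m γ : ℝ) (u u' : ℝ → H) (t : ℝ) : ℝ :=
  F (u t) + m / γ * ⟪gradient F (u t), u' t⟫ + m * ‖u' t‖ ^ 2

theorem HasGradientAt.comp_hasDerivAt {F : H → ℝ} {F' : H} {u : ℝ → H} {u' : H} (x : ℝ)
    (hF : HasGradientAt F F' (u x)) (hu : HasDerivAt u u' x) :
    HasDerivAt (fun s => F (u s)) ⟪F', u'⟫ x := by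
  have := hF.hasFDerivAt.comp_hasDerivAt x hu
  rwa [InnerProductSpace.toDual_apply_apply] at this

theorem imogEnergy_rightDiniUpperLE_zero {F : H → ℝ} {u u' : ℝ → H} {w : H} {m γ L x : ℝ}
    (hm : 0 < m) (hγ : 0 < γ) (hmL : m * L ≤ γ ^ 2) (hF : DifferentiableAt ℝ F (u x))
    (hLip : ∀ᶠ z in 𝓝[>] x, ‖gradient F (u z) - gradient F (u x)‖ ≤ L * ‖u z - u x‖)
    (hu : HasDerivAt u (u' x) x) (hu' : HasDerivAt u' w x)
    (hdiss : ⟪gradient F (u x), m • w + γ • u' x⟫ ≤ -‖m • w + γ • u' x‖ ^ 2) :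
    RightDiniUpperLE (imogEnergy F m γ u u') 0 x := by
  refine (((hF.hasGradientAt.comp_hasDerivAt x hu).rightDiniUpperLE.add
    ((rightDiniUpperLE_inner hLip hu hu').const_mul (div_pos hm hγ))).add
    (hu'.norm_sq.rightDiniUpperLE.const_mul hm)).mono ?_
  have := inner_dissipation_nonpos hmL hdiss
  field_simp
  linarith

theorem imogEnergy_le_initial {F : H → ℝ} {u u' u'' : ℝ → H} {m γ a b : ℝ} {L : NNReal}
    (hm : 0 < m) (hγ : 0 < γ) (hmL : m * L ≤ γ ^ 2)
    (hF : ∀ t ∈ Ico a b, DifferentiableAt ℝ F (u t))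
    (hLip : LipschitzOnWith L (gradient F) (u '' Ico a b))
    (hu : ∀ t ∈ Ico a b, HasDerivAt u (u' t) t) (hu' : ∀ t ∈ Ico a b, HasDerivAt u' (u'' t) t)
    (hdiss : ∀ t ∈ Ico a b,
      ⟪gradient F (u t), m • u'' t + γ • u' t⟫ ≤ -‖m • u'' t + γ • u' t‖ ^ 2) :
    ∀ t ∈ Ico a b, imogEnergy F m γ u u' t ≤ imogEnergy F m γ u u' a := by
  have hucont : ContinuousOn u (Ico a b) := fun t ht => (hu t ht).continuousAt.continuousWithinAt
  have hu'cont : ContinuousOn u' (Ico a b) :=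
    fun t ht => (hu' t ht).continuousAt.continuousWithinAt
  have hGcont : ContinuousOn (fun t => gradient F (u t)) (Ico a b) :=
    hLip.continuousOn.comp hucont (mapsTo_image u _)
  have hFcont : ContinuousOn (fun t => F (u t)) (Ico a b) :=
    fun t ht => (hF t ht).continuousAt.comp_continuousWithinAt (hucont t ht)
  refine image_le_of_rightDiniUpperLE_zero
    ((hFcont.add (continuousOn_const.mul (hGcont.inner hu'cont))).add
      (continuousOn_const.mul (hu'cont.norm.pow 2))) fun x hx => ?_
  refine imogEnergy_rightDiniUpperLE_zero hm hγ hmL (hF x hx) ?_ (hu x hx) (hu' x hx) (hdiss x hx)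
  filter_upwards [Ico_mem_nhdsGT hx.2] with z hz
  simpa [dist_eq_norm] using hLip.dist_le_mul (u z) (mem_image_of_mem u ⟨hx.1.trans hz.1, hz.2⟩)
    (u x) (mem_image_of_mem u hx)

theorem imogEnergy_le_of_inner_gradient_le {F : H → ℝ} {u u' : ℝ → H} {m γ t : ℝ} (hm : 0 ≤ m)
    (hγ : 0 < γ) (h : ⟪gradient F (u t), u' t⟫ ≤ -γ * ‖u' t‖ ^ 2) :
    imogEnergy F m γ u u' t ≤ F (u t) := by
  have := mul_le_mul_of_nonneg_left h (div_nonneg hm hγ.le)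
  rw [show m / γ * (-γ * ‖u' t‖ ^ 2) = -(m * ‖u' t‖ ^ 2) by field_simp] at this
  unfold imogEnergy
  linarith

end InnerProductSpace

theorem imog_improvement_over_initial_point_general
    {H : Type*} [NormedAddCommGroup H] [InnerProductSpace ℝ H] [CompleteSpace H]
    {q : ℕ} (f : Fin q → H → ℝ) (hf : ∀ i, ContDiff ℝ 1 (f i))
    (m γ : ℝ) (hm : 0 < m) (hγ : 0 < γ)
    (t₀ T : ℝ)
    (u u' u'' : ℝ → H)
    (hu : ∀ t ∈ Set.Ico t₀ T, HasDerivAt u (u' t) t)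
    (hu' : ∀ t ∈ Set.Ico t₀ T, HasDerivAt u' (u'' t) t)
    (hode : ∀ t ∈ Set.Ico t₀ T,
      -(m • u'' t + γ • u' t) ∈ convexHull ℝ (Set.range fun i => gradient (f i) (u t)) ∧
      ∀ y ∈ convexHull ℝ (Set.range fun i => gradient (f i) (u t)),
        ‖m • u'' t + γ • u' t‖ ≤ ‖y‖)
    (i : Fin q) (Li : NNReal)
    (hLi : LipschitzOnWith Li (gradient (f i)) (u '' Set.Ico t₀ T))
    (hHP : m * (Li : ℝ) < γ ^ 2)
    (hinit : ⟪gradient (f i) (u t₀), u' t₀⟫ ≤ -γ * ‖u' t₀‖ ^ 2) :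
    ∀ t ∈ Set.Ico t₀ T, f i (u t) ≤ f i (u t₀) := by
  have hdiff : ∀ t, DifferentiableAt ℝ (f i) (u t) :=
    fun t => ((hf i).differentiable one_ne_zero).differentiableAt
  have hdiss : ∀ t ∈ Ico t₀ T,
      ⟪gradient (f i) (u t), m • u'' t + γ • u' t⟫ ≤ -‖m • u'' t + γ • u' t‖ ^ 2 := by
    intro t ht
    obtain ⟨hmem, hmin⟩ := hode t ht
    have := norm_sq_le_inner_of_forall_norm_le (convex_convexHull ℝ _) hmem
      (fun y hy => (norm_neg _).trans_le (hmin y hy)) (subset_convexHull ℝ _ ⟨i, rfl⟩)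
    rw [norm_neg, inner_neg_right] at this
    linarith
  have henergy := imogEnergy_le_initial hm hγ hHP.le (fun t _ => hdiff t) hLi hu hu' hdiss
  have hexp := le_add_mul_exp_of_add_mul_deriv_le (div_pos hm hγ)
    (fun t ht => (hdiff t).hasGradientAt.comp_hasDerivAt t (hu t ht))
    fun t ht => (le_add_of_nonneg_right (by positivity)).trans (henergy t ht)
  have hslack := imogEnergy_le_of_inner_gradient_le (m := m) hm.le hγ hinit
  intro t ht
  have hexp_le_one : Real.exp (-(t - t₀) / (m / γ)) ≤ 1 :=
    Real.exp_le_one_iff.2 (div_nonpos_of_nonpos_of_nonneg (neg_nonpos.2 (sub_nonneg.2 ht.1))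
      (by positivity))
  linarith [hexp t ht, mul_le_mul_of_nonneg_left hexp_le_one (sub_nonneg.2 hslack)]

/-- Improvement over the initial point: under the dissipative hypothesis `γ² > m L_i`,
if the initial velocity satisfies `⟨∇f_i(u₀), u̇₀⟩ ≤ -γ‖u̇₀‖²`, then the (IMOG)
trajectory satisfies `f_i(u(t)) ≤ f_i(u₀)` for all `t ≥ t₀`. -/
theorem imog_improvement_over_initial_point
    {H : Type*} [NormedAddCommGroup H] [InnerProductSpace ℝ H] [CompleteSpace H]
    {q : ℕ} (f : Fin q → H → ℝ) (hf : ∀ i, ContDiff ℝ 1 (f i))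
    (m γ : ℝ) (hm : 0 < m) (hγ : 0 < γ)
    (t₀ T : ℝ) (hT : t₀ < T)
    (u u' u'' : ℝ → H)
    (hu : ∀ t ∈ Set.Ico t₀ T, HasDerivAt u (u' t) t)
    (hu' : ∀ t ∈ Set.Ico t₀ T, HasDerivAt u' (u'' t) t)
    (hode : ∀ t ∈ Set.Ico t₀ T,
      -(m • u'' t + γ • u' t) ∈ convexHull ℝ (Set.range fun i => gradient (f i) (u t)) ∧
      ∀ y ∈ convexHull ℝ (Set.range fun i => gradient (f i) (u t)),
        ‖m • u'' t + γ • u' t‖ ≤ ‖y‖)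
    (i : Fin q) (Li : NNReal)
    (hLi : LipschitzOnWith Li (gradient (f i)) (u '' Set.Ico t₀ T))
    (hHP : m * (Li : ℝ) < γ ^ 2)
    (hinit : ⟪gradient (f i) (u t₀), u' t₀⟫ ≤ -γ * ‖u' t₀‖ ^ 2) :
    ∀ t ∈ Set.Ico t₀ T, f i (u t) ≤ f i (u t₀) :=
  imog_improvement_over_initial_point_general f hf m γ hm hγ t₀ T u u' u'' hu hu' hode i Li hLi hHP
    hinit
end
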